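/- arXiv:2405.12952 — 5 statements merged into one kernel-verified Lean document; each statement's English description precedes it below -/
import Mathlib

section
/- Let a, b, x ∈ ℝⁿ and γ, α > 0 with γ < 1. Define c by c_i = median{a_i - (1-γ)α, b_i, a_i + (1-γ)α} for each i. Then ‖c - x‖_∞ ≤ max{‖b - x‖_∞, ‖a - x‖_∞ - (1-γ)α}. -/
/-- Only the sandwich `min b (a + s) ≤ c ≤ max (a - s) b` is used: it bounds `c - x` by
`max (b - x) (a - x - s)` and `x - c` by `max (x - b) (x - a - s)`. -/
theorem abs_max_min_sub_le {α : Type*} [AddCommGroup α] [LinearOrder α] [IsOrderedAddMonoid α]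
    (a b x s : α) :
    |max (a - s) (min b (a + s)) - x| ≤ max |b - x| (|a - x| - s) := by
  set c := max (a - s) (min b (a + s))
  have hlower : min b (a + s) ≤ c := le_max_right _ _
  have hupper : c ≤ max (a - s) b := max_le_max_left _ (min_le_left _ _)
  rw [abs_sub_le_iff]
  constructor
  · calc c - x ≤ max (a - s) b - x := sub_le_sub_right hupper x
      _ = max (b - x) (a - x - s) := by rw [← max_sub_sub_right, max_comm, sub_right_comm]
      _ ≤ max |b - x| (|a - x| - s) :=
        max_le_max (le_abs_self _) (sub_le_sub_right (le_abs_self _) s)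
  · calc x - c ≤ x - min b (a + s) := sub_le_sub_left hlower x
      _ = max (x - b) (x - a - s) := by rw [← max_sub_sub_left, sub_add_eq_sub_sub]
      _ ≤ max |b - x| (|a - x| - s) := by
        rw [abs_sub_comm b, abs_sub_comm a]
        exact max_le_max (le_abs_self _) (sub_le_sub_right (le_abs_self _) s)

theorem stmt_0_general (n : ℕ) (a b x : Fin n → ℝ) (γ α : ℝ)
    (c : Fin n → ℝ)
    (hc : ∀ i, c i = max (a i - (1 - γ) * α) (min (b i) (a i + (1 - γ) * α))) :
    ‖c - x‖ ≤ max ‖b - x‖ (‖a - x‖ - (1 - γ) * α) := by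
  refine (pi_norm_le_iff_of_nonneg (le_max_of_le_left (norm_nonneg _))).mpr fun i => ?_
  have hb : |b i - x i| ≤ ‖b - x‖ := by simpa using norm_le_pi_norm (b - x) i
  have ha : |a i - x i| ≤ ‖a - x‖ := by simpa using norm_le_pi_norm (a - x) i
  calc ‖(c - x) i‖ = |max (a i - (1 - γ) * α) (min (b i) (a i + (1 - γ) * α)) - x i| := by
        rw [Pi.sub_apply, Real.norm_eq_abs, hc i]
    _ ≤ max |b i - x i| (|a i - x i| - (1 - γ) * α) := abs_max_min_sub_le _ _ _ _
    _ ≤ max ‖b - x‖ (‖a - x‖ - (1 - γ) * α) := max_le_max hb (by linarith)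

/-- Entrywise median truncation bound (Lemma on median trick, first part). -/
theorem stmt_0 (n : ℕ) (a b x : Fin n → ℝ) (γ α : ℝ)
    (hγ : 0 < γ) (hγ1 : γ < 1) (hα : 0 < α)
    (c : Fin n → ℝ)
    (hc : ∀ i, c i = max (a i - (1 - γ) * α) (min (b i) (a i + (1 - γ) * α))) :
    ‖c - x‖ ≤ max ‖b - x‖ (‖a - x‖ - (1 - γ) * α) :=
  stmt_0_general n a b x γ α c hc
end

section
/- Let a, b, x ∈ ℝⁿ and γ ∈ (0,1), α > 0. Define c entrywise by c_i = median{a_i - (1-γ)α, b_i, a_i + (1-γ)α}. If ‖b - x‖_∞ ≤ γ‖a - x‖_∞ and ‖a - x‖_∞ ≤ α, then ‖c - x‖_∞ ≤ γα. -/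
/-! Coordinatewise, `c i` is `b i` clamped to `[a i - r, a i + r]`. Moving `b i` towards `a i`
keeps it within `s` of `x i` as long as the endpoints do not overshoot, which holds when
`|a i - x i| ≤ r + s`. With `r = (1 - γ) α` and `s = γ α` both bounds come from the hypotheses. -/

theorem abs_max_sub_min_add_sub_le {a b x r s : ℝ} (ha : |a - x| ≤ r + s) (hb : |b - x| ≤ s) :
    |max (a - r) (min b (a + r)) - x| ≤ s := by
  rw [abs_le] at ha hb ⊢
  constructor
  · have : x - s ≤ min b (a + r) := le_min (by linarith) (by linarith)
    linarith [le_max_right (a - r) (min b (a + r))]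
  · have : max (a - r) (min b (a + r)) ≤ x + s :=
      max_le (by linarith) ((min_le_left _ _).trans (by linarith))
    linarith

theorem pi_norm_max_sub_min_add_sub_le {ι : Type*} [Fintype ι] {a b x : ι → ℝ} {r s : ℝ}
    (ha : ‖a - x‖ ≤ r + s) (hb : ‖b - x‖ ≤ s) :
    ‖(fun i ↦ max (a i - r) (min (b i) (a i + r))) - x‖ ≤ s := by
  refine (pi_norm_le_iff_of_nonneg ((norm_nonneg _).trans hb)).2 fun i ↦ ?_
  have coord_le {v : ι → ℝ} {t : ℝ} (hv : ‖v - x‖ ≤ t) : |v i - x i| ≤ t :=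
    (norm_le_pi_norm (v - x) i).trans hv
  exact abs_max_sub_min_add_sub_le (coord_le ha) (coord_le hb)

theorem stmt_1_general (n : ℕ) (a b x : Fin n → ℝ) (γ α : ℝ)
    (hγ : 0 < γ)
    (c : Fin n → ℝ)
    (hc : ∀ i, c i = max (a i - (1 - γ) * α) (min (b i) (a i + (1 - γ) * α)))
    (hb : ‖b - x‖ ≤ γ * ‖a - x‖) (ha : ‖a - x‖ ≤ α) :
    ‖c - x‖ ≤ γ * α := by
  obtain rfl : c = fun i ↦ max (a i - (1 - γ) * α) (min (b i) (a i + (1 - γ) * α)) := funext hc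
  refine pi_norm_max_sub_min_add_sub_le (by linarith) ?_
  exact hb.trans (mul_le_mul_of_nonneg_left ha hγ.le)

/-- Entrywise median truncation contraction (Lemma on median trick, second part). -/
theorem stmt_1 (n : ℕ) (a b x : Fin n → ℝ) (γ α : ℝ)
    (hγ : 0 < γ) (hγ1 : γ < 1) (hα : 0 < α)
    (c : Fin n → ℝ)
    (hc : ∀ i, c i = max (a i - (1 - γ) * α) (min (b i) (a i + (1 - γ) * α)))
    (hb : ‖b - x‖ ≤ γ * ‖a - x‖) (ha : ‖a - x‖ ≤ α) :
    ‖c - x‖ ≤ γ * α :=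
  stmt_1_general n a b x γ α hγ c hc hb ha
end

section
/- Let P be a row-stochastic matrix on finite S, γ ∈ (0,1), ξ ∈ ℝ^S with ξ ≥ 0, and α ≥ 0. Suppose a sequence of vectors e⁽⁰⁾, e⁽¹⁾, …, e⁽ᴸ⁾ ∈ ℝ^S satisfies 0 ≤ e⁽⁰⁾ ≤ α𝟏 and, for each ℓ ∈ [L] and each coordinate i, either e⁽ℓ⁾(i) ≤ γ(P e⁽ℓ⁻¹⁾)(i) + ξ(i) or e⁽ℓ⁾(i) ≤ γ e⁽ℓ⁻¹⁾(i), and all e⁽ℓ⁾ ≥ 0. Then e⁽ᴸ⁾ ≤ γᴸ α 𝟏 + ∑_{k=0}^{L} γᵏ Pᵏ ξ entrywise. -/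
/-!
Write `B ℓ = γ^ℓ α 𝟏 + ∑_{k ≤ ℓ} γᵏ Pᵏ ξ`. Since `P 𝟏 = 𝟏`, the bound satisfies the exact recursion
`B (ℓ+1) = γ P B ℓ + ξ`, and since `0 ≤ γ ≤ 1` and the sum is nonnegative, also `γ B ℓ ≤ B (ℓ+1)`.
As `P` is nonnegative, `P` is monotone, so whichever of the two updates a coordinate of `e` follows,
`e ℓ ≤ B ℓ` propagates to `e (ℓ+1) ≤ B (ℓ+1)`.
-/

open Finset Matrix

theorem Matrix.mulVec_mono_of_nonneg {m n R : Type*} [Fintype n] [Semiring R] [PartialOrder R]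
    [IsOrderedRing R] {A : Matrix m n R} (hA : ∀ i j, 0 ≤ A i j) : Monotone (A *ᵥ ·) :=
  fun _ _ h i => sum_le_sum fun j _ => mul_le_mul_of_nonneg_left (h j) (hA i j)

namespace DiscountedError

variable {S : Type*} [Fintype S] [DecidableEq S] (P : Matrix S S ℝ) (γ : ℝ) (ξ : S → ℝ)

noncomputable def discountedSum (ℓ : ℕ) : S → ℝ :=
  ∑ k ∈ range (ℓ + 1), γ ^ k • (P ^ k *ᵥ ξ)

noncomputable def bound (α : ℝ) (ℓ : ℕ) : S → ℝ :=
  (γ ^ ℓ * α) • 1 + discountedSum P γ ξ ℓ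

theorem discountedSum_succ (ℓ : ℕ) :
    discountedSum P γ ξ (ℓ + 1) = ξ + γ • P *ᵥ discountedSum P γ ξ ℓ := by
  rw [discountedSum, sum_range_succ', discountedSum, mulVec_sum, smul_sum, add_comm]
  congr 1
  · simp
  · refine sum_congr rfl fun k _ => ?_
    rw [mulVec_smul, smul_smul, mulVec_mulVec, ← pow_succ', ← pow_succ']

variable {P γ ξ}

theorem pow_mulVec_nonneg (hP : P ∈ rowStochastic ℝ S) (hξ : 0 ≤ ξ) (k : ℕ) :
    0 ≤ P ^ k *ᵥ ξ :=
  nonneg_mulVec_of_mem_rowStochastic (pow_mem hP k) hξ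

theorem discountedSum_nonneg (hP : P ∈ rowStochastic ℝ S) (hγ : 0 ≤ γ) (hξ : 0 ≤ ξ) (ℓ : ℕ) :
    0 ≤ discountedSum P γ ξ ℓ :=
  sum_nonneg fun k _ => smul_nonneg (pow_nonneg hγ k) (pow_mulVec_nonneg hP hξ k)

theorem discountedSum_le_succ (hP : P ∈ rowStochastic ℝ S) (hγ : 0 ≤ γ) (hξ : 0 ≤ ξ) (ℓ : ℕ) :
    discountedSum P γ ξ ℓ ≤ discountedSum P γ ξ (ℓ + 1) := by
  rw [discountedSum, discountedSum, sum_range_succ _ (ℓ + 1)]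
  exact le_add_of_nonneg_right <| smul_nonneg (pow_nonneg hγ _) (pow_mulVec_nonneg hP hξ _)

theorem smul_bound_le_bound_succ (hP : P ∈ rowStochastic ℝ S) (hγ0 : 0 ≤ γ) (hγ1 : γ ≤ 1)
    (hξ : 0 ≤ ξ) (α : ℝ) (ℓ : ℕ) : γ • bound P γ ξ α ℓ ≤ bound P γ ξ α (ℓ + 1) := calc
  γ • bound P γ ξ α ℓ = (γ ^ (ℓ + 1) * α) • 1 + γ • discountedSum P γ ξ ℓ := by
    rw [bound, smul_add, smul_smul, pow_succ', mul_assoc]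
  _ ≤ (γ ^ (ℓ + 1) * α) • 1 + discountedSum P γ ξ (ℓ + 1) := by
    grw [smul_le_of_le_one_left (discountedSum_nonneg hP hγ0 hξ ℓ) hγ1,
      discountedSum_le_succ hP hγ0 hξ ℓ]

theorem smul_mulVec_bound_add (hP1 : P *ᵥ 1 = 1) (α : ℝ) (ℓ : ℕ) :
    γ • P *ᵥ bound P γ ξ α ℓ + ξ = bound P γ ξ α (ℓ + 1) := by
  rw [bound, bound, discountedSum_succ, mulVec_add, mulVec_smul, hP1, smul_add, smul_smul,
    pow_succ', mul_assoc]
  abel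

theorem bound_apply (α : ℝ) (ℓ : ℕ) (i : S) :
    bound P γ ξ α ℓ i = γ ^ ℓ * α + ∑ k ∈ range (ℓ + 1), γ ^ k * (P ^ k *ᵥ ξ) i := by
  simp [bound, discountedSum, Finset.sum_apply]

theorem le_bound_zero (hξ : 0 ≤ ξ) {α : ℝ} {u : S → ℝ} (hu : ∀ i, u i ≤ α) :
    u ≤ bound P γ ξ α 0 := fun i => by
  simpa [bound_apply] using le_add_of_le_of_nonneg (hu i) (hξ i)

theorem le_bound_succ (hP : P ∈ rowStochastic ℝ S) (hγ0 : 0 ≤ γ) (hγ1 : γ ≤ 1) (hξ : 0 ≤ ξ)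
    {α : ℝ} {ℓ : ℕ} {u v : S → ℝ} (hu : u ≤ bound P γ ξ α ℓ)
    (hv : ∀ i, v i ≤ γ * (P *ᵥ u) i + ξ i ∨ v i ≤ γ * u i) :
    v ≤ bound P γ ξ α (ℓ + 1) := by
  intro i
  rcases hv i with h | h
  · calc v i ≤ γ * (P *ᵥ u) i + ξ i := h
      _ ≤ γ * (P *ᵥ bound P γ ξ α ℓ) i + ξ i := by
        gcongr
        exact mulVec_mono_of_nonneg (fun _ _ => nonneg_of_mem_rowStochastic hP) hu i
      _ = bound P γ ξ α (ℓ + 1) i :=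
        congrFun (smul_mulVec_bound_add (one_vecMul_of_mem_rowStochastic hP) α ℓ) i
  · calc v i ≤ γ * u i := h
      _ ≤ γ * bound P γ ξ α ℓ i := by gcongr; exact hu i
      _ ≤ bound P γ ξ α (ℓ + 1) i := smul_bound_le_bound_succ hP hγ0 hγ1 hξ α ℓ i

theorem le_bound (hP : P ∈ rowStochastic ℝ S) (hγ0 : 0 ≤ γ) (hγ1 : γ ≤ 1) (hξ : 0 ≤ ξ)
    {α : ℝ} {e : ℕ → S → ℝ} {L : ℕ} (h0 : ∀ i, e 0 i ≤ α)
    (hstep : ∀ ℓ < L, ∀ i,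
      e (ℓ + 1) i ≤ γ * (P *ᵥ e ℓ) i + ξ i ∨ e (ℓ + 1) i ≤ γ * e ℓ i) :
    ∀ ℓ ≤ L, e ℓ ≤ bound P γ ξ α ℓ := by
  intro ℓ hℓ
  induction ℓ with
  | zero => exact le_bound_zero hξ h0
  | succ ℓ ih => exact le_bound_succ hP hγ0 hγ1 hξ (ih (by omega)) (hstep ℓ hℓ)

end DiscountedError

theorem stmt_9_general {S : Type*} [Fintype S] [DecidableEq S]
    (P : Matrix S S ℝ) (hP0 : ∀ s t, 0 ≤ P s t) (hP1 : ∀ s, ∑ t, P s t = 1)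
    (γ : ℝ) (hγ0 : 0 < γ) (hγ1 : γ < 1)
    (ξ : S → ℝ) (hξ : ∀ s, 0 ≤ ξ s) (α : ℝ)
    (L : ℕ) (e : ℕ → S → ℝ)
    (he0 : ∀ i, 0 ≤ e 0 i ∧ e 0 i ≤ α)
    (hstep : ∀ ℓ ∈ Finset.Icc 1 L, ∀ i,
      e ℓ i ≤ γ * (P *ᵥ e (ℓ - 1)) i + ξ i ∨ e ℓ i ≤ γ * e (ℓ - 1) i) :
    ∀ i, e L i ≤ γ ^ L * α + ∑ k ∈ Finset.range (L + 1), γ ^ k * ((P ^ k) *ᵥ ξ) i := by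
  have hP : P ∈ rowStochastic ℝ S := mem_rowStochastic_iff_sum.2 ⟨hP0, hP1⟩
  have hstep_succ : ∀ ℓ < L, ∀ i,
      e (ℓ + 1) i ≤ γ * (P *ᵥ e ℓ) i + ξ i ∨ e (ℓ + 1) i ≤ γ * e ℓ i := fun ℓ hℓ =>
    hstep (ℓ + 1) (mem_Icc.2 ⟨by omega, hℓ⟩)
  intro i
  rw [← DiscountedError.bound_apply]
  exact DiscountedError.le_bound hP hγ0.le hγ1.le hξ (fun i => (he0 i).2) hstep_succ L le_rfl i

/-- Error accumulation bound for approximate value iteration: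
if each step either contracts or contracts through `P` with additive error `ξ`,
then `e⁽ᴸ⁾ ≤ γᴸ α 𝟏 + ∑_{k=0}^{L} γᵏ Pᵏ ξ` entrywise. -/
theorem stmt_9 {S : Type*} [Fintype S] [DecidableEq S] [Nonempty S]
    (P : Matrix S S ℝ) (hP0 : ∀ s t, 0 ≤ P s t) (hP1 : ∀ s, ∑ t, P s t = 1)
    (γ : ℝ) (hγ0 : 0 < γ) (hγ1 : γ < 1)
    (ξ : S → ℝ) (hξ : ∀ s, 0 ≤ ξ s) (α : ℝ) (hα : 0 ≤ α)
    (L : ℕ) (e : ℕ → S → ℝ)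
    (he0 : ∀ i, 0 ≤ e 0 i ∧ e 0 i ≤ α)
    (hpos : ∀ ℓ i, 0 ≤ e ℓ i)
    (hstep : ∀ ℓ ∈ Finset.Icc 1 L, ∀ i,
      e ℓ i ≤ γ * (P *ᵥ e (ℓ - 1)) i + ξ i ∨ e ℓ i ≤ γ * e (ℓ - 1) i) :
    ∀ i, e L i ≤ γ ^ L * α + ∑ k ∈ Finset.range (L + 1), γ ^ k * ((P ^ k) *ᵥ ξ) i :=
  stmt_9_general P hP0 hP1 γ hγ0 hγ1 ξ hξ α L e he0 hstep
end

section
/- Let P be a row-stochastic matrix on finite S, γ ∈ (0,1), α ≥ 0, and suppose a nonnegative sequence e⁽⁰⁾,…,e⁽ᴸ⁾ ∈ ℝ^S satisfies e⁽⁰⁾ ≤ α𝟏 and, coordinatewise, e⁽ℓ⁾(i) ≤ max{ γ(P e⁽ℓ⁻¹⁾)(i) + γ(1−γ)(α/4), γ e⁽ℓ⁻¹⁾(i) } for all ℓ and i. If L > log(8)/(1−γ), then e⁽ᴸ⁾ ≤ (α/2) 𝟏 entrywise. -/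
open Finset Matrix

/-- Halving the error: with additive error `γ(1−γ)α/4` per step and
`L > log 8/(1−γ)` iterations, the error drops below `α/2`. -/
theorem stmt_10 {S : Type*} [Fintype S] [DecidableEq S] [Nonempty S]
    (P : Matrix S S ℝ) (hP0 : ∀ s t, 0 ≤ P s t) (hP1 : ∀ s, ∑ t, P s t = 1)
    (γ : ℝ) (hγ0 : 0 < γ) (hγ1 : γ < 1)
    (α : ℝ) (hα : 0 ≤ α)
    (L : ℕ) (hL : (L : ℝ) > Real.log 8 / (1 - γ))
    (e : ℕ → S → ℝ)
    (he0 : ∀ i, 0 ≤ e 0 i ∧ e 0 i ≤ α)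
    (hpos : ∀ ℓ i, 0 ≤ e ℓ i)
    (hstep : ∀ ℓ ∈ Finset.Icc 1 L, ∀ i,
      e ℓ i ≤ max (γ * (P *ᵥ e (ℓ - 1)) i + γ * (1 - γ) * (α / 4)) (γ * e (ℓ - 1) i)) :
    ∀ i, e L i ≤ α / 2 := by
  have hγ0' : (0:ℝ) ≤ γ := le_of_lt hγ0
  -- main inductive bound
  have key : ∀ ℓ, ℓ ≤ L → ∀ i, e ℓ i ≤ γ ^ ℓ * α + α / 4 := by
    intro ℓ
    induction ℓ with
    | zero =>
      intro _ i
      simpa using le_trans (he0 i).2 (by nlinarith)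
    | succ n ih =>
      intro hn i
      have hn' : n ≤ L := Nat.le_of_succ_le hn
      have ihb := ih hn'
      have hmem : n + 1 ∈ Finset.Icc 1 L := by
        simp [Nat.succ_le_iff]
        omega
      have h := hstep (n + 1) hmem i
      simp only [Nat.add_sub_cancel] at h
      have hB : γ ^ n * α + α / 4 ≥ 0 := by positivity
      rcases le_total (γ * (P *ᵥ e n) i + γ * (1 - γ) * (α / 4)) (γ * e n i) with hc | hc
      · have := max_eq_right hc ▸ h
        have h2 : γ * e n i ≤ γ * (γ ^ n * α + α / 4) :=
          mul_le_mul_of_nonneg_left (ihb i) hγ0'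
        calc e (n+1) i ≤ γ * e n i := this
          _ ≤ γ * (γ ^ n * α + α / 4) := h2
          _ ≤ γ ^ (n+1) * α + α / 4 := by
              rw [pow_succ]; nlinarith [pow_nonneg hγ0' n]
      · have := max_eq_left hc ▸ h
        have hmul : (P *ᵥ e n) i ≤ γ ^ n * α + α / 4 := by
          have : (P *ᵥ e n) i = ∑ t, P i t * e n t := by
            simp [Matrix.mulVec, dotProduct]
          rw [this]
          calc ∑ t, P i t * e n t ≤ ∑ t, P i t * (γ ^ n * α + α / 4) := by
                apply Finset.sum_le_sum
                intro t _
                exact mul_le_mul_of_nonneg_left (ihb t) (hP0 i t)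
            _ = (γ ^ n * α + α / 4) := by rw [← Finset.sum_mul, hP1 i, one_mul]
        calc e (n+1) i ≤ γ * (P *ᵥ e n) i + γ * (1 - γ) * (α / 4) := this
          _ ≤ γ * (γ ^ n * α + α / 4) + γ * (1 - γ) * (α / 4) :=
              add_le_add_left (mul_le_mul_of_nonneg_left hmul hγ0') _
          _ ≤ γ ^ (n+1) * α + α / 4 := by
              rw [pow_succ]; nlinarith [pow_nonneg hγ0' n, sq_nonneg (1 - γ)]
  -- bound γ^L ≤ 1/4
  have hg1 : (0:ℝ) < 1 - γ := by linarith
  have hlog8 : Real.log 8 < L * (1 - γ) := by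
    have := (div_lt_iff₀ hg1).mp hL
    linarith
  have hlogγ : Real.log γ ≤ γ - 1 := Real.log_le_sub_one_of_pos hγ0
  have hpow : γ ^ L < 1 / 8 := by
    have h1 : γ ^ L = Real.exp ((L : ℝ) * Real.log γ) := by
      rw [Real.exp_nat_mul, Real.exp_log hγ0]
    have h2 : (L : ℝ) * Real.log γ < -Real.log 8 := by
      have : (L : ℝ) * Real.log γ ≤ (L : ℝ) * (γ - 1) :=
        mul_le_mul_of_nonneg_left hlogγ (Nat.cast_nonneg L)
      nlinarith
    rw [h1]
    calc Real.exp ((L : ℝ) * Real.log γ) < Real.exp (-Real.log 8) :=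
          Real.exp_lt_exp.mpr h2
      _ = 1 / 8 := by
          rw [Real.exp_neg, Real.exp_log (by norm_num : (0:ℝ) < 8)]
          norm_num
  intro i
  have := key L le_rfl i
  nlinarith [mul_le_mul_of_nonneg_right (le_of_lt hpow) hα]
end

section
/- Let P be a row-stochastic matrix on finite S, γ ∈ (0,1), and v ∈ ℝ^S with 0 ≤ v(s) ≤ 1/(1−γ) satisfying v = r + γPv for some vector r with entries in [0,1]. Define σ_v ∈ ℝ^S by σ_v = P(v²) − (Pv)² (entrywise square). Then ‖(I − γP)⁻¹ √σ_v‖_∞² ≤ (1+γ)/(γ²(1−γ)³). -/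
open Finset Matrix

section Aux
variable {S : Type*} [Fintype S] [DecidableEq S] [Nonempty S]

lemma aux_det_ne_zero (P : Matrix S S ℝ) (hP0 : ∀ s t, 0 ≤ P s t) (hP1 : ∀ s, ∑ t, P s t = 1)
    (γ : ℝ) (hγ0 : 0 < γ) (hγ1 : γ < 1) : ((1 : Matrix S S ℝ) - γ • P).det ≠ 0 := by
  intro hdet
  obtain ⟨x, hx0, hx⟩ := (Matrix.exists_mulVec_eq_zero_iff).2 hdet
  have hxe : ∀ s, x s = γ * (P *ᵥ x) s := by
    simpa using congrFun (sub_eq_zero.mp (show x - γ • (P *ᵥ x) = 0 by simpa [Matrix.sub_mulVec, Matrix.one_mulVec,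
      Matrix.smul_mulVec] using hx))
  obtain ⟨s, -, hs⟩ := Finset.exists_max_image Finset.univ (fun s => |x s|)
    ⟨Classical.arbitrary S, Finset.mem_univ _⟩
  have habs : |x s| ≤ γ * |x s| := by
    calc |x s| = γ * |(P *ᵥ x) s| := by rw [hxe s, abs_mul, abs_of_pos hγ0]
    _ ≤ γ * |x s| := by
        apply mul_le_mul_of_nonneg_left _ hγ0.le
        calc |∑ t, P s t * x t| ≤ ∑ t, |P s t * x t| := Finset.abs_sum_le_sum_abs _ _
          _ ≤ ∑ t, P s t * |x s| := by
              refine Finset.sum_le_sum fun t _ => ?_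
              rw [abs_mul, abs_of_nonneg (hP0 s t)]
              exact mul_le_mul_of_nonneg_left (hs t (Finset.mem_univ t)) (hP0 s t)
          _ = |x s| := by rw [← Finset.sum_mul, hP1 s, one_mul]
  have hzs : |x s| = 0 := by nlinarith [abs_nonneg (x s)]
  apply hx0
  funext t
  have h0 : |x t| ≤ 0 := le_of_le_of_eq (hs t (Finset.mem_univ t)) hzs
  have := (abs_nonneg (x t)).antisymm h0
  simpa [abs_eq_zero] using this.symm

end Aux

/-- Bound on the total discounted standard deviation of a policy's value vector:
`‖(I − γP)⁻¹ √σ_v‖_∞² ≤ (1+γ)/(γ²(1−γ)³)`. -/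
theorem stmt_13 {S : Type*} [Fintype S] [DecidableEq S] [Nonempty S]
    (P : Matrix S S ℝ) (hP0 : ∀ s t, 0 ≤ P s t) (hP1 : ∀ s, ∑ t, P s t = 1)
    (γ : ℝ) (hγ0 : 0 < γ) (hγ1 : γ < 1)
    (r : S → ℝ) (hr : ∀ s, r s ∈ Set.Icc (0 : ℝ) 1)
    (v : S → ℝ) (hv : ∀ s, 0 ≤ v s ∧ v s ≤ 1 / (1 - γ))
    (hval : v = r + γ • (P *ᵥ v))
    (σv : S → ℝ) (hσ : ∀ s, σv s = (P *ᵥ fun t => (v t) ^ 2) s - ((P *ᵥ v) s) ^ 2) :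
    ‖(1 - γ • P)⁻¹ *ᵥ fun s => Real.sqrt (σv s)‖ ^ 2 ≤
      (1 + γ) / (γ ^ 2 * (1 - γ) ^ 3) := by
  have h1γ : (0:ℝ) < 1 - γ := by linarith
  set M : Matrix S S ℝ := 1 - γ • P with hM
  set N : Matrix S S ℝ := M⁻¹ with hN
  have hdet : IsUnit M.det :=
    (Ne.isUnit (aux_det_ne_zero P hP0 hP1 γ hγ0 hγ1))
  have hNM : N * M = 1 := Matrix.nonsing_inv_mul M hdet
  have hMN : M * N = 1 := Matrix.mul_nonsing_inv M hdet
  -- N (M y) = y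
  have hNMy : ∀ y : S → ℝ, N *ᵥ (M *ᵥ y) = y := by
    intro y; rw [Matrix.mulVec_mulVec, hNM, Matrix.one_mulVec]
  have hMNy : ∀ y : S → ℝ, M *ᵥ (N *ᵥ y) = y := by
    intro y; rw [Matrix.mulVec_mulVec, hMN, Matrix.one_mulVec]
  have hMform : ∀ (y : S → ℝ) (s : S), (M *ᵥ y) s = y s - γ * (P *ᵥ y) s := by
    intro y s
    simp [hM, Matrix.sub_mulVec, Matrix.one_mulVec, Matrix.smul_mulVec]
  -- positivity of N
  have hpos : ∀ x : S → ℝ, (∀ t, 0 ≤ x t) → ∀ s, 0 ≤ (N *ᵥ x) s := by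
    intro x hx s
    set y := N *ᵥ x with hy
    have hMy : ∀ u, y u = x u + γ * (P *ᵥ y) u := by
      intro u
      have := congrFun (hMNy x) u
      rw [hMform y u] at this
      linarith
    obtain ⟨s₀, -, hs₀⟩ := Finset.exists_min_image Finset.univ y
      ⟨Classical.arbitrary S, Finset.mem_univ _⟩
    have hkey : y s₀ ≥ γ * y s₀ := by
      have hP : (P *ᵥ y) s₀ ≥ y s₀ := by
        calc (P *ᵥ y) s₀ = ∑ t, P s₀ t * y t := rfl
          _ ≥ ∑ t, P s₀ t * y s₀ := Finset.sum_le_sum fun t _ =>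
              mul_le_mul_of_nonneg_left (hs₀ t (Finset.mem_univ t)) (hP0 s₀ t)
          _ = y s₀ := by rw [← Finset.sum_mul, hP1 s₀, one_mul]
      have := hMy s₀
      nlinarith [hx s₀]
    have hy0 : 0 ≤ y s₀ := by nlinarith
    exact le_trans hy0 (hs₀ s (Finset.mem_univ s))
  have hNnn : ∀ s t, 0 ≤ N s t := by
    intro s t
    have := hpos (Pi.single t 1) (fun u => by
      by_cases h : u = t <;> simp [Pi.single_apply, h]) s
    simpa [Matrix.mulVec_single] using this
  -- row sums of N
  have hrow : ∀ s, ∑ t, N s t = 1 / (1 - γ) := by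
    have hMone : M *ᵥ (fun _ => 1 / (1 - γ)) = fun _ => (1:ℝ) := by
      funext s
      rw [hMform]
      have : (P *ᵥ fun _ => 1 / (1-γ)) s = 1/(1-γ) := by
        simp [Matrix.mulVec, dotProduct, ← Finset.sum_mul, hP1 s]
      rw [this]; field_simp
    intro s
    have := congrFun (by rw [← hMone, hNMy] : N *ᵥ (fun _ => (1:ℝ)) = fun _ => 1/(1-γ)) s
    simpa [Matrix.mulVec, dotProduct] using this
  -- σv nonneg
  have hσ0 : ∀ s, 0 ≤ σv s := by
    intro s
    rw [hσ s]
    have := Finset.sum_sq_le_sum_mul_sum_of_sq_eq_mul Finset.univ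
      (r := fun t => P s t * v t) (f := fun t => P s t) (g := fun t => P s t * v t ^ 2)
      (fun t _ => hP0 s t) (fun t _ => mul_nonneg (hP0 s t) (sq_nonneg _))
      (fun t _ => by ring)
    have h1 : ((P *ᵥ v) s) ^ 2 ≤ (∑ t, P s t) * ∑ t, P s t * v t ^ 2 := this
    rw [hP1 s, one_mul] at h1
    have : (P *ᵥ fun t => v t ^ 2) s = ∑ t, P s t * v t ^ 2 := rfl
    linarith
  -- Bellman: γ (P v) s = v s - r s
  have hbell : ∀ s, γ * (P *ᵥ v) s = v s - r s := by
    intro s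
    have := congrFun hval s
    simp [Pi.add_apply, Pi.smul_apply] at this
    linarith
  -- monotonicity of N from entrywise nonnegativity
  have hmono : ∀ x y : S → ℝ, (∀ t, x t ≤ y t) → ∀ s, (N *ᵥ x) s ≤ (N *ᵥ y) s := by
    intro x y hxy s
    exact Finset.sum_le_sum fun t _ => mul_le_mul_of_nonneg_left (hxy t) (hNnn s t)
  -- key pointwise bound on N σ
  have hNσ : ∀ s, (N *ᵥ σv) s ≤ 1 / (γ * (1 - γ) ^ 2) := by
    set g : S → ℝ := fun t => γ * (P *ᵥ fun u => v u ^ 2) t - v t ^ 2 with hg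
    have hptwise : ∀ t, γ^2 * σv t ≤ γ * g t + γ / (1 - γ) := by
      intro t
      rw [hσ t, hg]
      have hb := hbell t
      have hrs := hr t
      have hvs := hv t
      have key2 : γ * (1 - γ) * v t ^ 2 - γ ≤ (1 - γ) * (v t - r t) ^ 2 := by
        nlinarith [sq_nonneg ((1 - γ) * v t - r t), hrs.1, hrs.2, hvs.1,
          mul_nonneg (sub_nonneg.2 hrs.2) (by linarith [hrs.1] : (0:ℝ) ≤ 1 + r t)]
      have hd : γ / (1 - γ) * (1 - γ) = γ := div_mul_cancel₀ γ h1γ.ne'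
      have key : γ * v t ^ 2 - γ / (1 - γ) ≤ (v t - r t) ^ 2 := by nlinarith [key2, hd, h1γ]
      have h2 : (γ * (P *ᵥ v) t) ^ 2 = (v t - r t) ^ 2 := by rw [hb]
      nlinarith [h2]
    intro s
    have h1 : ∑ t, N s t * (γ^2 * σv t) ≤ ∑ t, N s t * (γ * g t + γ / (1 - γ)) :=
      Finset.sum_le_sum fun t _ => mul_le_mul_of_nonneg_left (hptwise t) (hNnn s t)
    have hLHS : ∑ t, N s t * (γ^2 * σv t) = γ^2 * (N *ᵥ σv) s := by
      rw [show (N *ᵥ σv) s = ∑ t, N s t * σv t from rfl, Finset.mul_sum]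
      exact Finset.sum_congr rfl fun t _ => by ring
    have hRHS : ∑ t, N s t * (γ * g t + γ / (1 - γ))
        = γ * (N *ᵥ g) s + (γ / (1 - γ)) * ∑ t, N s t := by
      rw [show (N *ᵥ g) s = ∑ t, N s t * g t from rfl, Finset.mul_sum, Finset.mul_sum,
        ← Finset.sum_add_distrib]
      exact Finset.sum_congr rfl fun t _ => by ring
    have hgM : g = -(M *ᵥ fun u => v u ^ 2) := by
      funext u
      rw [Pi.neg_apply, hMform, hg]
      ring
    have hNg : (N *ᵥ g) s = -(v s ^ 2) := by
      rw [hgM, Matrix.mulVec_neg, Pi.neg_apply, hNMy]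
    rw [hLHS, hRHS, hNg, hrow s] at h1
    have hvs2 : 0 ≤ v s ^ 2 := sq_nonneg _
    have hq : γ / (1 - γ) * (1 / (1 - γ)) = γ / (1 - γ)^2 := by
      rw [div_mul_div_comm, mul_one, ← sq]
    rw [hq] at h1
    rw [le_div_iff₀ (by positivity : (0:ℝ) < γ * (1-γ)^2)]
    have hd2 : γ / (1 - γ)^2 * (1 - γ)^2 = γ := div_mul_cancel₀ γ (by positivity)
    have h1' := mul_le_mul_of_nonneg_right h1 (sq_nonneg (1 - γ))
    nlinarith [h1', hd2, mul_nonneg (mul_nonneg hγ0.le hvs2) (sq_nonneg (1-γ)), hγ0]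
  -- Jensen / Cauchy-Schwarz for N
  set w : S → ℝ := N *ᵥ fun s => Real.sqrt (σv s) with hw
  have hws : ∀ s, (w s)^2 ≤ 1 / (γ * (1 - γ) ^ 3) := by
    intro s
    have hcs := Finset.sum_sq_le_sum_mul_sum_of_sq_eq_mul Finset.univ
      (r := fun t => N s t * Real.sqrt (σv t)) (f := fun t => N s t)
      (g := fun t => N s t * σv t)
      (fun t _ => hNnn s t) (fun t _ => mul_nonneg (hNnn s t) (hσ0 t))
      (fun t _ => by rw [mul_pow, Real.sq_sqrt (hσ0 t)]; ring)
    have hws : w s = ∑ t, N s t * Real.sqrt (σv t) := rfl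
    have hNσs : (N *ᵥ σv) s = ∑ t, N s t * σv t := rfl
    rw [hws]
    calc (∑ t, N s t * Real.sqrt (σv t))^2 ≤ (∑ t, N s t) * ∑ t, N s t * σv t := hcs
      _ = (1/(1-γ)) * (N *ᵥ σv) s := by rw [hrow s, hNσs]
      _ ≤ (1/(1-γ)) * (1 / (γ * (1-γ)^2)) := by
          apply mul_le_mul_of_nonneg_left (hNσ s) (by positivity)
      _ = 1 / (γ * (1 - γ)^3) := by field_simp
  -- finish: norm bound
  have hB : (0:ℝ) ≤ 1 / (γ * (1 - γ) ^ 3) := by positivity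
  have hnorm : ‖w‖ ≤ Real.sqrt (1 / (γ * (1 - γ) ^ 3)) := by
    rw [pi_norm_le_iff_of_nonneg (Real.sqrt_nonneg _)]
    intro s
    rw [Real.norm_eq_abs, ← Real.sqrt_sq_eq_abs]
    exact Real.sqrt_le_sqrt (hws s)
  have h2 : ‖w‖^2 ≤ 1 / (γ * (1 - γ) ^ 3) := by
    calc ‖w‖^2 ≤ Real.sqrt (1 / (γ * (1 - γ) ^ 3))^2 := by
          apply pow_le_pow_left₀ (norm_nonneg _) hnorm
      _ = 1 / (γ * (1 - γ) ^ 3) := Real.sq_sqrt hB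
  calc ‖w‖^2 ≤ 1 / (γ * (1 - γ) ^ 3) := h2
    _ ≤ (1 + γ) / (γ ^ 2 * (1 - γ) ^ 3) := by
        rw [div_le_div_iff₀ (by positivity) (by positivity)]
        nlinarith [pow_pos h1γ 3, sq_nonneg γ]
end
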